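/- A Borel probability measure on the d-dimensional Sierpinski gasket K that is invariant under all symmetries of K and satisfies the self-similar identity assigns equal mass to all level-n cells; since distinct dyadic points are contained in arbitrarily small disjoint neighborhoods and there are infinitely many dyadic points of comparable mass, the measure has no atoms at dyadic points: λ({p_x}) = 0 for every nonempty word x. -/

import Mathlib

open MeasureTheory Set Filter
noncomputable section

abbrev E (d : ℕ) := EuclideanSpace ℝ (Fin d)

variable {d : ℕ}

/-- The maps of the Sierpinski gasket IFS: `F p i x = (p i + x)/2`. -/
def F (p : Fin (d+1) → E d) (i : Fin (d+1)) (x : E d) : E d := midpoint ℝ (p i) x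

/-- `F_x = F_{i₁} ∘ ⋯ ∘ F_{iₙ}` for a word `x = i₁…iₙ`. -/
def Fword (p : Fin (d+1) → E d) (w : List (Fin (d+1))) : E d → E d :=
  w.foldr (fun i f => F p i ∘ f) id

/-- The cell `K_x = F_x(K)`. -/
def Kcell (p : Fin (d+1) → E d) (K : Set (E d)) (w : List (Fin (d+1))) : Set (E d) :=
  Fword p w '' K

/-- Edges of the augmented rooted tree (Sierpinski graph): vertical edges to the
parent (drop the last letter) and horizontal edges between distinct equal-length
words whose cells intersect. -/
def Edge (p : Fin (d+1) → E d) (K : Set (E d)) (x y : List (Fin (d+1))) : Prop :=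
  (x ≠ [] ∧ y = x.dropLast) ∨ (y ≠ [] ∧ x = y.dropLast) ∨
    (x ≠ y ∧ x.length = y.length ∧ (Kcell p K x ∩ Kcell p K y).Nonempty)

/-- The symmetry group of `K`: isometries of `ℝ^d` mapping `K` onto itself. -/
def symGroup (K : Set (E d)) : Subgroup (E d ≃ᵢ E d) where
  carrier := {g | g '' K = K}
  one_mem' := by simp
  mul_mem' := by
    intro a b ha hb
    simp only [Set.mem_setOf_eq] at *
    have h : ⇑(a * b) = ⇑a ∘ ⇑b := rfl
    rw [h, Set.image_comp, hb, ha]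
  inv_mem' := by
    intro a ha
    simp only [Set.mem_setOf_eq] at *
    conv_lhs => rw [← ha]
    rw [← Set.image_comp]
    simp

/-!
Every symmetry of `K` permutes the vertices `pᵢ` (in a strictly convex space the only points
of the simplex `conv{pᵢ}` at distance `1 = diam` from another one are vertices), the `Rᵢ`
generate all permutations, and a symmetry preserving `K₀ = F₀(K)` fixes `p₀`. So for every
`D ⊆ K` invariant under the symmetries fixing `p₀`, the self-similar identity applied to
`B = F₀(D)` gives `λ(D) = λ(⋃ᵢ Fᵢ(Rᵢ D))`.

For `D = {p₀}` this says `λ{p₀} = λ{p₀, …, p_d}`, and all `λ{pᵢ}` are equal, so the vertices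
are null. For `D` the finite, fully symmetric set of dyadic points of level `n` it says that
level `n + 1` is null when level `n` is. Distinct cells of one level meet only in dyadic points,
hence are `λ`-almost disjoint, and taking for `D` the union of the cells `K_u`, `u` in the orbit
of `v` under the permutations fixing `0`, counts `λ(K_v) = (d + 1) λ(K_{0v})`.
-/

theorem dist_F (p : Fin (d+1) → E d) (i : Fin (d+1)) (x y : E d) :
    dist (F p i x) (F p i y) = dist x y / 2 := by
  simp only [F, dist_eq_norm, midpoint_eq_smul_add, ← smul_sub, add_sub_add_left_eq_sub,
    norm_smul]
  norm_num
  ring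

theorem lipschitzWith_F (p : Fin (d+1) → E d) (i : Fin (d+1)) : LipschitzWith 1 (F p i) :=
  LipschitzWith.of_dist_le_mul fun x y => by
    rw [dist_F]; push_cast; linarith [dist_nonneg (x := x) (y := y)]

theorem antilipschitzWith_F (p : Fin (d+1) → E d) (i : Fin (d+1)) :
    AntilipschitzWith 2 (F p i) :=
  AntilipschitzWith.of_le_mul_dist fun x y => by
    rw [dist_F]; push_cast; linarith [dist_nonneg (x := x) (y := y)]

theorem F_injective (p : Fin (d+1) → E d) (i : Fin (d+1)) : Function.Injective (F p i) :=
  (antilipschitzWith_F p i).injective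

theorem measurableEmbedding_F (p : Fin (d+1) → E d) (i : Fin (d+1)) :
    MeasurableEmbedding (F p i) :=
  ((antilipschitzWith_F p i).isClosedEmbedding
    (lipschitzWith_F p i).uniformContinuous).measurableEmbedding

theorem F_self (p : Fin (d+1) → E d) (i : Fin (d+1)) : F p i (p i) = p i :=
  midpoint_self ℝ (p i)

theorem dist_vertex_F (p : Fin (d+1) → E d) (i : Fin (d+1)) (x : E d) :
    dist (p i) (F p i x) = dist (p i) x / 2 := by
  simpa only [F_self] using dist_F p i (p i) x

theorem Kcell_cons (p : Fin (d+1) → E d) (K : Set (E d)) (i : Fin (d+1))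
    (w : List (Fin (d+1))) : Kcell p K (i :: w) = F p i '' Kcell p K w :=
  image_comp (F p i) (Fword p w) K

theorem isCompact_Kcell {p : Fin (d+1) → E d} {K : Set (E d)} (hKc : IsCompact K)
    (w : List (Fin (d+1))) : IsCompact (Kcell p K w) := by
  induction w with
  | nil => exact hKc.image continuous_id
  | cons i w ih => exact (Kcell_cons p K i w) ▸ ih.image (lipschitzWith_F p i).continuous

section Isometry

variable {p : Fin (d+1) → E d} {g : E d ≃ᵢ E d}

theorem IsometryEquiv.apply_F {i j : Fin (d+1)} (hg : g (p i) = p j) (x : E d) :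
    g (F p i x) = F p j (g x) := by
  rw [F, g.map_midpoint, hg]; rfl

theorem IsometryEquiv.image_F_image {i j : Fin (d+1)} (hg : g (p i) = p j) (S : Set (E d)) :
    g '' (F p i '' S) = F p j '' (g '' S) := by
  simp only [image_image, g.apply_F hg]

variable {σ : Fin (d+1) → Fin (d+1)}

theorem IsometryEquiv.apply_Fword (hg : ∀ j, g (p j) = p (σ j)) (w : List (Fin (d+1)))
    (x : E d) : g (Fword p w x) = Fword p (w.map σ) (g x) := by
  induction w with
  | nil => rfl
  | cons i w ih => exact (g.apply_F (hg i) _).trans (congrArg (F p (σ i)) ih)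

theorem IsometryEquiv.image_Kcell {K : Set (E d)} (hgK : g '' K = K)
    (hg : ∀ j, g (p j) = p (σ j)) (w : List (Fin (d+1))) :
    g '' Kcell p K w = Kcell p K (w.map σ) := by
  conv_rhs => rw [Kcell, ← hgK, image_image]
  simp only [Kcell, image_image, g.apply_Fword hg]

end Isometry

theorem mem_of_mem_convexHull_of_dist_eq {V : Type*} [NormedAddCommGroup V] [NormedSpace ℝ V]
    [StrictConvexSpace ℝ V] {s : Set V} {r : ℝ}
    (hr : ∀ a ∈ convexHull ℝ s, ∀ b ∈ convexHull ℝ s, dist a b ≤ r) {x y : V}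
    (hx : x ∈ convexHull ℝ s) (hy : y ∈ convexHull ℝ s) (hxy : dist x y = r) : x ∈ s := by
  refine extremePoints_convexHull_subset
    (mem_extremePoints_iff_left.2 ⟨hx, fun a ha b hb hab => ?_⟩)
  obtain rfl : a = b := by
    by_contra hne
    have := openSegment_subset_ball_of_ne (Metric.mem_closedBall.2 (hr a ha y hy))
      (Metric.mem_closedBall.2 (hr b hb y hy)) hne hab
    exact (Metric.mem_ball.1 this).ne hxy
  rw [openSegment_same] at hab
  exact hab.symm

section Geometry

variable {p : Fin (d+1) → E d} {K : Set (E d)}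

theorem injective_of_dist_eq_one (hp : ∀ i j, i ≠ j → dist (p i) (p j) = 1) :
    Function.Injective p :=
  fun i j h => by_contra fun hij => by
    have := hp i j hij
    rw [h, dist_self] at this
    exact zero_ne_one this

theorem dist_le_one_of_mem_convexHull (hp : ∀ i j, i ≠ j → dist (p i) (p j) = 1)
    {x y : E d} (hx : x ∈ convexHull ℝ (range p)) (hy : y ∈ convexHull ℝ (range p)) :
    dist x y ≤ 1 := by
  have hdiam : Metric.diam (range p) ≤ 1 := by
    refine Metric.diam_le_of_forall_dist_le zero_le_one ?_
    rintro _ ⟨i, rfl⟩ _ ⟨j, rfl⟩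
    rcases eq_or_ne i j with rfl | hij
    · simp
    · exact (hp i j hij).le
  rw [← convexHull_diam] at hdiam
  exact (Metric.dist_le_diam_of_mem
    ((finite_range p).isCompact_convexHull (𝕜 := ℝ).isBounded) hx hy).trans hdiam

theorem F_image_subset (hKself : K = ⋃ i, F p i '' K) (i : Fin (d+1)) : F p i '' K ⊆ K := by
  intro x hx
  rw [hKself]
  exact mem_iUnion.2 ⟨i, hx⟩

theorem Kcell_subset (hKself : K = ⋃ i, F p i '' K) (w : List (Fin (d+1))) :
    Kcell p K w ⊆ K := by
  induction w with
  | nil => exact (image_id K).subset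
  | cons i w ih =>
    exact (Kcell_cons p K i w).trans_subset ((image_mono ih).trans (F_image_subset hKself i))

theorem vertex_mem (hKc : IsCompact K) (hKne : K.Nonempty) (hKself : K = ⋃ i, F p i '' K)
    (i : Fin (d+1)) : p i ∈ K := by
  obtain ⟨x, hxK, hx⟩ := hKc.exists_infDist_eq_dist hKne (p i)
  have hle : dist (p i) x ≤ dist (p i) x / 2 := calc
    dist (p i) x = Metric.infDist (p i) K := hx.symm
    _ ≤ dist (p i) (F p i x) :=
      Metric.infDist_le_dist_of_mem (F_image_subset hKself i (mem_image_of_mem _ hxK))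
    _ = dist (p i) x / 2 := dist_vertex_F p i x
  have hx0 : dist (p i) x = 0 := by linarith [dist_nonneg (x := p i) (y := x)]
  rwa [dist_eq_zero.1 hx0]

theorem subset_convexHull_range (hKc : IsCompact K) (hKne : K.Nonempty)
    (hKself : K = ⋃ i, F p i '' K) : K ⊆ convexHull ℝ (range p) := by
  set H := convexHull ℝ (range p)
  have hHc : IsCompact H := (finite_range p).isCompact_convexHull (𝕜 := ℝ)
  have hHne : H.Nonempty := ⟨p 0, subset_convexHull ℝ _ (mem_range_self 0)⟩
  obtain ⟨z, hzK, hz⟩ := hKc.exists_isMaxOn hKne (Metric.continuous_infDist_pt H).continuousOn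
  -- the farthest point `z = F_j y` of `K` from `H` is twice as close to `H` as `y`
  have hz0 : Metric.infDist z H ≤ 0 := by
    obtain ⟨j, y, hyK, rfl⟩ := mem_iUnion.1 (hKself.subset hzK)
    obtain ⟨h, hhH, hdh⟩ := hHc.exists_infDist_eq_dist hHne y
    have hFh : F p j h ∈ H :=
      (convex_convexHull ℝ _).midpoint_mem (subset_convexHull ℝ _ (mem_range_self j)) hhH
    have h1 : Metric.infDist (F p j y) H ≤ Metric.infDist y H / 2 := by
      rw [hdh, ← dist_F p j y h]
      exact Metric.infDist_le_dist_of_mem hFh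
    linarith [isMaxOn_iff.1 hz y hyK, Metric.infDist_nonneg (x := y) (s := H)]
  intro x hxK
  exact (hHc.isClosed.mem_iff_infDist_zero hHne).2
    (le_antisymm ((hz hxK).trans hz0) Metric.infDist_nonneg)

theorem dist_le_one (hp : ∀ i j, i ≠ j → dist (p i) (p j) = 1) (hKc : IsCompact K)
    (hKne : K.Nonempty) (hKself : K = ⋃ i, F p i '' K) {x y : E d} (hx : x ∈ K) (hy : y ∈ K) :
    dist x y ≤ 1 :=
  dist_le_one_of_mem_convexHull hp (subset_convexHull_range hKc hKne hKself hx)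
    (subset_convexHull_range hKc hKne hKself hy)

theorem eq_of_vertex_mem_F_image (hp : ∀ i j, i ≠ j → dist (p i) (p j) = 1)
    (hKc : IsCompact K) (hKne : K.Nonempty) (hKself : K = ⋃ i, F p i '' K) {i k : Fin (d+1)}
    (hk : p k ∈ F p i '' K) : k = i := by
  obtain ⟨y, hyK, hy⟩ := hk
  by_contra hki
  have := dist_vertex_F p i y
  rw [hy, dist_comm, hp k i hki] at this
  linarith [dist_le_one hp hKc hKne hKself (vertex_mem hKc hKne hKself i) hyK]

theorem F_image_inter_subset (hp : ∀ i j, i ≠ j → dist (p i) (p j) = 1) (hKc : IsCompact K)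
    (hKne : K.Nonempty) (hKself : K = ⋃ i, F p i '' K) {a b : Fin (d+1)} (hab : a ≠ b) :
    F p a '' K ∩ F p b '' K ⊆ {F p a (p b)} := by
  rintro x ⟨⟨y, hyK, rfl⟩, ⟨z, hzK, hz⟩⟩
  have hya := dist_le_one hp hKc hKne hKself (vertex_mem hKc hKne hKself a) hyK
  have hzb := dist_le_one hp hKc hKne hKself (vertex_mem hKc hKne hKself b) hzK
  have ha := dist_vertex_F p a y
  have hb := dist_vertex_F p b z
  have htri := dist_triangle (p a) (F p a y) (p b)
  rw [hz, dist_comm] at hb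
  rw [hp a b hab] at htri
  rw [mem_singleton_iff]
  exact eq_midpoint_of_dist_eq_half (by rw [hp a b hab]; linarith) (by rw [hp a b hab]; linarith)

theorem apply_vertex_mem_range (hd : 1 ≤ d) (hp : ∀ i j, i ≠ j → dist (p i) (p j) = 1)
    (hKc : IsCompact K) (hKne : K.Nonempty) (hKself : K = ⋃ i, F p i '' K)
    {g : E d ≃ᵢ E d} (hg : g '' K = K) (j : Fin (d+1)) : g (p j) ∈ range p := by
  have : Nontrivial (Fin (d+1)) := Fin.nontrivial_iff_two_le.2 (by omega)
  obtain ⟨k, hkj⟩ := exists_ne j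
  have hmem : ∀ i, g (p i) ∈ convexHull ℝ (range p) := fun i =>
    subset_convexHull_range hKc hKne hKself
      (hg.subset (mem_image_of_mem g (vertex_mem hKc hKne hKself i)))
  exact mem_of_mem_convexHull_of_dist_eq (fun a ha b hb => dist_le_one_of_mem_convexHull hp ha hb)
    (hmem j) (hmem k) (by rw [g.dist_eq]; exact hp j k hkj.symm)

theorem exists_perm_apply_vertex (hd : 1 ≤ d) (hp : ∀ i j, i ≠ j → dist (p i) (p j) = 1)
    (hKc : IsCompact K) (hKne : K.Nonempty) (hKself : K = ⋃ i, F p i '' K)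
    {g : E d ≃ᵢ E d} (hg : g '' K = K) :
    ∃ σ : Equiv.Perm (Fin (d+1)), ∀ j, g (p j) = p (σ j) := by
  choose σ hσ using fun j => apply_vertex_mem_range hd hp hKc hKne hKself hg j
  have hinj : Function.Injective σ := fun a b hab =>
    injective_of_dist_eq_one hp (g.injective (by rw [← hσ a, ← hσ b, hab]))
  exact ⟨Equiv.ofBijective σ (Finite.injective_iff_bijective.1 hinj), fun j => (hσ j).symm⟩

end Geometry

section Permutations

open Equiv

variable {p : Fin (d+1) → E d} {K : Set (E d)}

def vertexPerms (p : Fin (d+1) → E d) (K : Set (E d)) : Subgroup (Perm (Fin (d+1))) where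
  carrier := {σ | ∃ g ∈ symGroup K, ∀ j, g (p j) = p (σ j)}
  one_mem' := ⟨1, (symGroup K).one_mem, fun _ => rfl⟩
  mul_mem' := by
    rintro σ τ ⟨g, hg, hgσ⟩ ⟨h, hh, hhτ⟩
    exact ⟨g * h, mul_mem hg hh, fun j => by rw [IsometryEquiv.mul_apply, hhτ, hgσ]; rfl⟩
  inv_mem' := by
    rintro σ ⟨g, hg, hgσ⟩
    refine ⟨g⁻¹, inv_mem hg, fun j => ?_⟩
    rw [← g.inv_apply_self (p (σ⁻¹ j)), hgσ, Perm.coe_inv, apply_symm_apply]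

theorem reflection_apply_vertex {R : Fin (d+1) → E d ≃ᵢ E d} (hR0 : ∀ x, R 0 x = x)
    (hRswap : ∀ i, i ≠ 0 → R i (p 0) = p i ∧ R i (p i) = p 0 ∧
      ∀ l, l ≠ 0 → l ≠ i → R i (p l) = p l) (i j : Fin (d+1)) :
    R i (p j) = p (swap 0 i j) := by
  rcases eq_or_ne i 0 with rfl | hi0
  · rw [hR0, swap_self, refl_apply]
  obtain ⟨h0, hi, hl⟩ := hRswap i hi0
  rcases eq_or_ne j 0 with rfl | hj0
  · rw [h0, swap_apply_left]
  rcases eq_or_ne j i with rfl | hji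
  · rw [hi, swap_apply_right]
  · rw [hl j hj0 hji, swap_apply_of_ne_of_ne hj0 hji]

theorem vertexPerms_eq_top {R : Fin (d+1) → E d ≃ᵢ E d} (hRsym : ∀ i, R i '' K = K)
    (hRp : ∀ i j, R i (p j) = p (swap 0 i j)) : vertexPerms p K = ⊤ := by
  have hswap : ∀ i, swap 0 i ∈ vertexPerms p K := fun i => ⟨R i, hRsym i, hRp i⟩
  rw [eq_top_iff, ← Perm.closure_isSwap, Subgroup.closure_le]
  rintro _ ⟨x, y, -, rfl⟩
  exact SubmonoidClass.swap_mem_trans _ (swap_comm x 0 ▸ hswap x) (hswap y)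

/-- The address of the cell `Fᵢ(Rᵢ K_u)` for `iu = (i, u)`. -/
def consSwap (iu : Fin (d+1) × List (Fin (d+1))) : List (Fin (d+1)) :=
  iu.1 :: iu.2.map (swap 0 iu.1)

theorem consSwap_injective : Function.Injective (consSwap (d := d)) := by
  rintro ⟨i, u⟩ ⟨j, u'⟩ h
  simp only [consSwap, List.cons.injEq] at h
  obtain ⟨rfl, h⟩ := h
  rw [List.map_injective_iff.2 (swap 0 i).injective h]

theorem iUnion_F_image_image_biUnion_Kcell {R : Fin (d+1) → E d ≃ᵢ E d}
    (hRsym : ∀ i, R i '' K = K) (hRp : ∀ i j, R i (p j) = p (swap 0 i j))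
    (U : Finset (List (Fin (d+1)))) :
    ⋃ i, F p i '' (R i '' ⋃ u ∈ U, Kcell p K u) =
      ⋃ x ∈ (Finset.univ ×ˢ U).image consSwap, Kcell p K x := by
  ext x
  simp only [image_iUnion₂, (R _).image_Kcell (hRsym _) (hRp _), ← Kcell_cons, consSwap,
    Finset.set_biUnion_finset_image, mem_iUnion, Finset.mem_product, Finset.mem_univ, true_and,
    exists_prop, Prod.exists]

end Permutations

section Dyadic

variable {p : Fin (d+1) → E d} {K : Set (E d)}

/-- The dyadic points `p_x` with `x` a word of length `n + 1`. -/
def dyadicPoints (p : Fin (d+1) → E d) : ℕ → Set (E d)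
  | 0 => range p
  | n + 1 => ⋃ i, F p i '' dyadicPoints p n

theorem Fword_mem_dyadicPoints (p : Fin (d+1) → E d) (u : List (Fin (d+1))) (i : Fin (d+1)) :
    Fword p u (p i) ∈ dyadicPoints p u.length := by
  induction u with
  | nil => exact mem_range_self i
  | cons j u ih => exact mem_iUnion.2 ⟨j, mem_image_of_mem _ ih⟩

theorem finite_dyadicPoints (p : Fin (d+1) → E d) (n : ℕ) : (dyadicPoints p n).Finite := by
  induction n with
  | zero => exact finite_range p
  | succ n ih => exact finite_iUnion fun i => ih.image _

theorem dyadicPoints_subset (hKc : IsCompact K) (hKne : K.Nonempty)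
    (hKself : K = ⋃ i, F p i '' K) (n : ℕ) : dyadicPoints p n ⊆ K := by
  induction n with
  | zero => exact range_subset_iff.2 (vertex_mem hKc hKne hKself)
  | succ n ih => exact iUnion_subset fun i => (image_mono ih).trans (F_image_subset hKself i)

theorem IsometryEquiv.image_dyadicPoints {g : E d ≃ᵢ E d} {σ : Equiv.Perm (Fin (d+1))}
    (hg : ∀ j, g (p j) = p (σ j)) (n : ℕ) : g '' dyadicPoints p n = dyadicPoints p n := by
  induction n with
  | zero =>
    rw [dyadicPoints, ← range_comp, show ⇑g ∘ p = p ∘ σ from funext hg]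
    exact σ.surjective.range_comp p
  | succ n ih =>
    simp only [dyadicPoints, image_iUnion, g.image_F_image (hg _), ih]
    exact σ.surjective.iUnion_comp fun i => F p i '' dyadicPoints p n

theorem Kcell_inter_subset (hp : ∀ i j, i ≠ j → dist (p i) (p j) = 1) (hKc : IsCompact K)
    (hKne : K.Nonempty) (hKself : K = ⋃ i, F p i '' K) {w w' : List (Fin (d+1))}
    (hlen : w.length = w'.length) (hne : w ≠ w') :
    Kcell p K w ∩ Kcell p K w' ⊆ ⋃ n, dyadicPoints p n := by
  induction w generalizing w' with
  | nil => exact absurd (List.length_eq_zero_iff.1 hlen.symm).symm hne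
  | cons a v ih =>
    obtain ⟨b, v', rfl⟩ := List.exists_cons_of_length_eq_add_one hlen.symm
    rw [Kcell_cons, Kcell_cons]
    rcases eq_or_ne a b with rfl | hab
    · rw [← image_inter (F_injective p a)]
      refine (image_mono (ih (by simpa using hlen) (by simpa using hne))).trans ?_
      rw [image_iUnion]
      exact iUnion_subset fun n =>
        (subset_iUnion (fun i => F p i '' dyadicPoints p n) a).trans
          (subset_iUnion (dyadicPoints p) (n + 1))
    · refine (inter_subset_inter (image_mono (Kcell_subset hKself v))
        (image_mono (Kcell_subset hKself v'))).trans
        ((F_image_inter_subset hp hKc hKne hKself hab).trans ?_)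
      exact singleton_subset_iff.2 (mem_iUnion.2 ⟨1, Fword_mem_dyadicPoints p [a] b⟩)

end Dyadic

section Measure

open Equiv

variable {p : Fin (d+1) → E d} {K : Set (E d)} {R : Fin (d+1) → E d ≃ᵢ E d}
  {lam : Measure (E d)}

def IsSymInvariant (K : Set (E d)) (lam : Measure (E d)) : Prop :=
  ∀ g ∈ symGroup K, ∀ B : Set (E d), MeasurableSet B → lam (g '' B) = lam B

def IsSelfSimilar (p : Fin (d+1) → E d) (K : Set (E d)) (R : Fin (d+1) → E d ≃ᵢ E d)
    (lam : Measure (E d)) : Prop :=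
  ∀ B : Set (E d), MeasurableSet B → B ⊆ F p 0 '' K →
    (∀ g ∈ symGroup K, g '' (F p 0 '' K) = F p 0 '' K → g '' B = B) →
    lam (F p 0 ⁻¹' B) = lam (⋃ i, R i '' B)

theorem measure_Kcell_map (hKc : IsCompact K) (hvert : vertexPerms p K = ⊤)
    (hinv : IsSymInvariant K lam) (σ : Perm (Fin (d+1))) (w : List (Fin (d+1))) :
    lam (Kcell p K (w.map σ)) = lam (Kcell p K w) := by
  obtain ⟨g, hg, hgσ⟩ : σ ∈ vertexPerms p K := hvert ▸ Subgroup.mem_top σ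
  rw [← g.image_Kcell hg hgσ]
  exact hinv g hg _ (isCompact_Kcell hKc w).measurableSet

/-- The self-similar identity for `B = F₀(D)`, rewritten with `Rᵢ ∘ F₀ = Fᵢ ∘ Rᵢ`. -/
theorem measure_eq_measure_iUnion_F_image (hd : 1 ≤ d)
    (hp : ∀ i j, i ≠ j → dist (p i) (p j) = 1) (hKc : IsCompact K) (hKne : K.Nonempty)
    (hKself : K = ⋃ i, F p i '' K) (hRp : ∀ i j, R i (p j) = p (swap 0 i j))
    (hss : IsSelfSimilar p K R lam) {D : Set (E d)} (hD : MeasurableSet D) (hDK : D ⊆ K)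
    (hDinv : ∀ g ∈ symGroup K, g (p 0) = p 0 → g '' D ⊆ D) :
    lam D = lam (⋃ i, F p i '' (R i '' D)) := by
  have hfix : ∀ g ∈ symGroup K, g '' (F p 0 '' K) = F p 0 '' K → g (p 0) = p 0 := by
    intro g hg hg0
    obtain ⟨σ, hσ⟩ := exists_perm_apply_vertex hd hp hKc hKne hKself hg
    have hmem : p (σ 0) ∈ F p 0 '' K :=
      hσ 0 ▸ hg0.subset (mem_image_of_mem g ⟨p 0, vertex_mem hKc hKne hKself 0, F_self p 0⟩)
    rw [hσ, eq_of_vertex_mem_F_image hp hKc hKne hKself hmem]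
  have hDeq : ∀ g ∈ symGroup K, g (p 0) = p 0 → g '' D = D := by
    refine fun g hg hg0 =>
      (hDinv g hg hg0).antisymm fun x hx => ⟨g⁻¹ x, ?_, g.apply_inv_self x⟩
    refine hDinv g⁻¹ (inv_mem hg) ?_ (mem_image_of_mem _ hx)
    rw [← hg0, IsometryEquiv.inv_apply_self, hg0]
  have hB := hss (F p 0 '' D) ((measurableEmbedding_F p 0).measurableSet_image.2 hD)
    (image_mono hDK) fun g hg hg0 => by
      rw [g.image_F_image (hfix g hg hg0), hDeq g hg (hfix g hg hg0)]
  rw [preimage_image_eq D (F_injective p 0)] at hB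
  simp only [hB, (R _).image_F_image ((hRp _ 0).trans (by rw [swap_apply_left]))]

theorem measure_range_vertex_eq_zero (hd : 1 ≤ d) [IsFiniteMeasure lam]
    (hp : ∀ i j, i ≠ j → dist (p i) (p j) = 1) (hKc : IsCompact K) (hKne : K.Nonempty)
    (hKself : K = ⋃ i, F p i '' K) (hRsym : ∀ i, R i '' K = K)
    (hRp : ∀ i j, R i (p j) = p (swap 0 i j)) (hinv : IsSymInvariant K lam)
    (hss : IsSelfSimilar p K R lam) : lam (range p) = 0 := by
  have hvertex : lam {p 0} = lam (range p) := by
    have := measure_eq_measure_iUnion_F_image hd hp hKc hKne hKself hRp hss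
      (measurableSet_singleton (p 0)) (singleton_subset_iff.2 (vertex_mem hKc hKne hKself 0))
      fun g _ hg0 => by rw [image_singleton, hg0]
    simpa only [image_singleton, hRp, swap_apply_left, F_self, iUnion_singleton_eq_range]
      using this
  have : Nontrivial (Fin (d+1)) := Fin.nontrivial_iff_two_le.2 (by omega)
  obtain ⟨i, hi⟩ := exists_ne (0 : Fin (d+1))
  have hsame : lam {p i} = lam {p 0} := by
    rw [← hinv (R i) (hRsym i) _ (measurableSet_singleton _), image_singleton, hRp,
      swap_apply_right]
  have hle : lam {p 0} + lam {p i} ≤ lam {p 0} + 0 := by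
    rw [add_zero, ← measure_union (disjoint_singleton.2
      (hi.symm.imp fun h => injective_of_dist_eq_one hp h)) (measurableSet_singleton _), hvertex]
    exact measure_mono (union_subset (singleton_subset_iff.2 (mem_range_self 0))
      (singleton_subset_iff.2 (mem_range_self i)))
  rw [← hvertex, ← hsame]
  exact nonpos_iff_eq_zero.1 (ENNReal.le_of_add_le_add_left (measure_ne_top _ _) hle)

theorem measure_dyadicPoints (hd : 1 ≤ d) [IsFiniteMeasure lam]
    (hp : ∀ i j, i ≠ j → dist (p i) (p j) = 1) (hKc : IsCompact K) (hKne : K.Nonempty)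
    (hKself : K = ⋃ i, F p i '' K) (hRsym : ∀ i, R i '' K = K)
    (hRp : ∀ i j, R i (p j) = p (swap 0 i j)) (hinv : IsSymInvariant K lam)
    (hss : IsSelfSimilar p K R lam) (n : ℕ) : lam (dyadicPoints p n) = 0 := by
  induction n with
  | zero => exact measure_range_vertex_eq_zero hd hp hKc hKne hKself hRsym hRp hinv hss
  | succ n ih =>
    have := measure_eq_measure_iUnion_F_image hd hp hKc hKne hKself hRp hss
      (finite_dyadicPoints p n).measurableSet (dyadicPoints_subset hKc hKne hKself n)
      fun g hg _ => by
        obtain ⟨σ, hσ⟩ := exists_perm_apply_vertex hd hp hKc hKne hKself hg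
        exact (g.image_dyadicPoints hσ n).subset
    simp only [(R _).image_dyadicPoints (hRp _)] at this
    rw [dyadicPoints, ← this, ih]

theorem measure_biUnion_Kcell (hp : ∀ i j, i ≠ j → dist (p i) (p j) = 1) (hKc : IsCompact K)
    (hKne : K.Nonempty) (hKself : K = ⋃ i, F p i '' K) (hvert : vertexPerms p K = ⊤)
    (hinv : IsSymInvariant K lam) (hnull : lam (⋃ n, dyadicPoints p n) = 0)
    {U : Finset (List (Fin (d+1)))} {w : List (Fin (d+1))}
    (hU : ∀ u ∈ U, ∃ σ : Perm (Fin (d+1)), u = w.map σ) :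
    lam (⋃ u ∈ U, Kcell p K u) = U.card * lam (Kcell p K w) := by
  have hlen : ∀ u ∈ U, u.length = w.length := fun u hu => by
    obtain ⟨σ, rfl⟩ := hU u hu
    exact List.length_map _
  rw [measure_biUnion_finset₀ (fun u hu u' hu' hne => measure_mono_null
      (Kcell_inter_subset hp hKc hKne hKself ((hlen u hu).trans (hlen u' hu').symm) hne) hnull)
      fun u _ => (isCompact_Kcell hKc u).measurableSet.nullMeasurableSet,
    Finset.sum_congr rfl fun u hu => ?_, Finset.sum_const, nsmul_eq_mul]
  obtain ⟨σ, rfl⟩ := hU u hu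
  exact measure_Kcell_map hKc hvert hinv σ w

/-- `D = ⋃ K_u` over the orbit `U` of `v` under the permutations fixing `0` is a union of `|U|`
copies of `K_v`, while `⋃ᵢ Fᵢ(Rᵢ D)` is a union of `(d + 1)|U|` copies of `K_{0v}`. -/
theorem measure_Kcell_cons_zero (hd : 1 ≤ d) (hp : ∀ i j, i ≠ j → dist (p i) (p j) = 1)
    (hKc : IsCompact K) (hKne : K.Nonempty) (hKself : K = ⋃ i, F p i '' K)
    (hRsym : ∀ i, R i '' K = K) (hRp : ∀ i j, R i (p j) = p (swap 0 i j))
    (hvert : vertexPerms p K = ⊤) (hinv : IsSymInvariant K lam) (hss : IsSelfSimilar p K R lam)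
    (hnull : lam (⋃ n, dyadicPoints p n) = 0) (v : List (Fin (d+1))) :
    lam (Kcell p K (0 :: v)) = ((d : ENNReal) + 1)⁻¹ * lam (Kcell p K v) := by
  set U := (Finset.univ.filter fun σ : Perm (Fin (d+1)) => σ 0 = 0).image
    fun σ : Perm (Fin (d+1)) => v.map σ
  set T := (Finset.univ ×ˢ U).image consSwap
  have hU : ∀ u ∈ U, ∃ σ : Perm (Fin (d+1)), σ 0 = 0 ∧ u = v.map σ := fun u hu => by
    obtain ⟨σ, hσ, rfl⟩ := Finset.mem_image.1 hu
    exact ⟨σ, (Finset.mem_filter.1 hσ).2, rfl⟩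
  have hT : ∀ x ∈ T, ∃ τ : Perm (Fin (d+1)), x = (0 :: v).map τ := fun x hx => by
    obtain ⟨⟨i, u⟩, hiu, rfl⟩ := Finset.mem_image.1 hx
    obtain ⟨σ, hσ0, rfl⟩ := hU u (Finset.mem_product.1 hiu).2
    exact ⟨swap 0 i * σ, by simp [consSwap, hσ0]⟩
  have hTcard : T.card = (d + 1) * U.card := by
    rw [Finset.card_image_of_injective _ consSwap_injective, Finset.card_product,
      Finset.card_univ, Fintype.card_fin]
  have hDinv : ∀ g ∈ symGroup K, g (p 0) = p 0 →
      g '' (⋃ u ∈ U, Kcell p K u) ⊆ ⋃ u ∈ U, Kcell p K u := by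
    intro g hg hg0
    obtain ⟨σ, hσ⟩ := exists_perm_apply_vertex hd hp hKc hKne hKself hg
    have hσ0 : σ 0 = 0 := injective_of_dist_eq_one hp ((hσ 0).symm.trans hg0)
    rw [image_iUnion₂]
    refine iUnion₂_subset fun u hu => ?_
    obtain ⟨τ, hτ0, rfl⟩ := hU u hu
    rw [g.image_Kcell hg hσ, List.map_map]
    exact subset_biUnion_of_mem (u := fun u => Kcell p K u) (Finset.mem_image.2
      ⟨σ * τ, Finset.mem_filter.2 ⟨Finset.mem_univ _, by simp [hσ0, hτ0]⟩, rfl⟩)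
  have hself := measure_eq_measure_iUnion_F_image hd hp hKc hKne hKself hRp hss
    (Finset.measurableSet_biUnion _ fun u _ => (isCompact_Kcell hKc u).measurableSet)
    (iUnion₂_subset fun u _ => Kcell_subset hKself u) hDinv
  have hD := measure_biUnion_Kcell hp hKc hKne hKself hvert hinv hnull fun u hu =>
    (hU u hu).imp fun _ h => h.2
  have hFRD := measure_biUnion_Kcell hp hKc hKne hKself hvert hinv hnull hT
  rw [hD, iUnion_F_image_image_biUnion_Kcell hRsym hRp, hFRD, hTcard, Nat.cast_mul,
    Nat.cast_add_one, mul_comm ((d : ENNReal) + 1), mul_assoc] at hself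
  have hvU : v ∈ U :=
    Finset.mem_image.2 ⟨1, Finset.mem_filter.2 ⟨Finset.mem_univ _, rfl⟩, by simp⟩
  rw [ENNReal.mul_right_inj (Nat.cast_ne_zero.2 (Finset.card_ne_zero_of_mem hvU))
    (ENNReal.natCast_ne_top _)] at hself
  rw [hself, ← mul_assoc, ENNReal.inv_mul_cancel (by positivity) (by simp), one_mul]

theorem measure_Kcell (hd : 1 ≤ d) (hp : ∀ i j, i ≠ j → dist (p i) (p j) = 1)
    (hKc : IsCompact K) (hKne : K.Nonempty) (hKself : K = ⋃ i, F p i '' K)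
    (hRsym : ∀ i, R i '' K = K) (hRp : ∀ i j, R i (p j) = p (swap 0 i j))
    (hvert : vertexPerms p K = ⊤) (hinv : IsSymInvariant K lam) (hss : IsSelfSimilar p K R lam)
    (hnull : lam (⋃ n, dyadicPoints p n) = 0) (w : List (Fin (d+1))) :
    lam (Kcell p K w) = ((d : ENNReal) + 1)⁻¹ ^ w.length * lam K := by
  induction w with
  | nil => simp [Kcell, Fword]
  | cons j v ih =>
    rw [← measure_Kcell_map hKc hvert hinv (swap 0 j), List.map_cons, swap_apply_right,
      measure_Kcell_cons_zero hd hp hKc hKne hKself hRsym hRp hvert hinv hss hnull,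
      measure_Kcell_map hKc hvert hinv, ih, List.length_cons, pow_succ]
    ring

end Measure

theorem stmt16_general (hd : 1 ≤ d) (p : Fin (d+1) → E d)
    (hp : ∀ i j, i ≠ j → dist (p i) (p j) = 1)
    (K : Set (E d)) (hKc : IsCompact K) (hKne : K.Nonempty)
    (hKself : K = ⋃ i, F p i '' K)
    (R : Fin (d+1) → (E d ≃ᵢ E d)) (hR0 : ∀ x, R 0 x = x)
    (hRsym : ∀ i, (R i) '' K = K)
    (hRswap : ∀ i, i ≠ 0 → R i (p 0) = p i ∧ R i (p i) = p 0 ∧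
      ∀ l, l ≠ 0 → l ≠ i → R i (p l) = p l)
    (lam : Measure (E d)) [IsProbabilityMeasure lam]
    (hinv : ∀ g : E d ≃ᵢ E d, g '' K = K →
      ∀ B : Set (E d), MeasurableSet B → lam (g '' B) = lam B)
    (hss : ∀ B : Set (E d), MeasurableSet B → B ⊆ F p 0 '' K →
      (∀ g : E d ≃ᵢ E d, g '' K = K → g '' (F p 0 '' K) = F p 0 '' K →
        g '' B = B) →
      lam (F p 0 ⁻¹' B) = lam (⋃ i, R i '' B)) :
    (∀ w w' : List (Fin (d+1)), w.length = w'.length →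
      lam (Kcell p K w) = lam (Kcell p K w')) ∧
    (∀ (u : List (Fin (d+1))) (i : Fin (d+1)), lam {Fword p u (p i)} = 0) := by
  have hRp := reflection_apply_vertex hR0 hRswap
  have hvert := vertexPerms_eq_top hRsym hRp
  have hdyadic := measure_dyadicPoints hd hp hKc hKne hKself hRsym hRp hinv hss
  have hcell := measure_Kcell hd hp hKc hKne hKself hRsym hRp hvert hinv hss
    (measure_iUnion_null hdyadic)
  refine ⟨fun w w' hlen => by rw [hcell, hcell, hlen], fun u i => ?_⟩
  exact measure_mono_null (singleton_subset_iff.2 (Fword_mem_dyadicPoints p u i)) (hdyadic _)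

/-- A symmetry-invariant Borel probability measure satisfying the self-similar
identity gives equal mass to all level-n cells and has no atoms at the dyadic
points `p_x = F_{i₁…i_{n-1}}(p_{iₙ})`. -/
theorem stmt16 (hd : 1 ≤ d) (p : Fin (d+1) → E d)
    (hp : ∀ i j, i ≠ j → dist (p i) (p j) = 1)
    (K : Set (E d)) (hKc : IsCompact K) (hKne : K.Nonempty)
    (hKself : K = ⋃ i, F p i '' K)
    (R : Fin (d+1) → (E d ≃ᵢ E d)) (hR0 : ∀ x, R 0 x = x)
    (hRsym : ∀ i, (R i) '' K = K)
    (hRswap : ∀ i, i ≠ 0 → R i (p 0) = p i ∧ R i (p i) = p 0 ∧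
      ∀ l, l ≠ 0 → l ≠ i → R i (p l) = p l)
    (lam : Measure (E d)) [IsProbabilityMeasure lam] (hlamK : lam K = 1)
    (hinv : ∀ g : E d ≃ᵢ E d, g '' K = K →
      ∀ B : Set (E d), MeasurableSet B → lam (g '' B) = lam B)
    (hss : ∀ B : Set (E d), MeasurableSet B → B ⊆ F p 0 '' K →
      (∀ g : E d ≃ᵢ E d, g '' K = K → g '' (F p 0 '' K) = F p 0 '' K →
        g '' B = B) →
      lam (F p 0 ⁻¹' B) = lam (⋃ i, R i '' B)) :
    (∀ w w' : List (Fin (d+1)), w.length = w'.length →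
      lam (Kcell p K w) = lam (Kcell p K w')) ∧
    (∀ (u : List (Fin (d+1))) (i : Fin (d+1)), lam {Fword p u (p i)} = 0) :=
  stmt16_general hd p hp K hKc hKne hKself R hR0 hRsym hRswap lam hinv hss
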